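/- Let ε₀, μ₀, τ₀, σ₀ > 0 and let (E, H, J, K) solve the abstract weak graphene system on [0, T_fin]. Then for every t ∈ [0, T_fin] one has the identity (1/2)·d/dt[ τ₀ε₀‖E'(t)‖²_X + σ₀‖T E(t)‖²_Z + μ₀‖τ₀^{1/2} H'(t) + τ₀^{−1/2} H(t)‖²_Y − (μ₀/τ₀)‖H(t)‖²_Y ] + ε₀‖E'(t)‖²_X = μ₀‖H'(t)‖²_Y − ⟨H(t), K'(t)⟩_Y − τ₀⟨H'(t), K'(t)⟩_Y. -/

import Mathlib

/-!
Expanding the square, the energy equals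
`τ₀ε₀‖E'‖² + σ₀‖TE‖² + μ₀τ₀‖H'‖² + 2μ₀⟪H', H⟫`. Differentiating it and adding `ε₀‖E'‖²`, the
terms are eliminated with equation (i) and its time derivative tested with `φ = E'`, equation (iii)
tested with `TE'`, and the time derivative of (ii) tested with `H` and `τ₀H'`: the `B`- and
`σ₀`-terms cancel in pairs, leaving only `μ₀‖H'‖²` and the source terms in `K'`.
Equations holding on `[0, T_fin]` may be differentiated there, endpoints included, because the
closed interval has unique one-sided derivatives.
-/

open scoped RealInnerProductSpace

theorem HasDerivAt.eq_of_eqOn {W : Type*} [NormedAddCommGroup W] [NormedSpace ℝ W]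
    {f g : ℝ → W} {f' g' : W} {s : Set ℝ} {t : ℝ} (hs : UniqueDiffWithinAt ℝ s t) (ht : t ∈ s)
    (hf : HasDerivAt f f' t) (hg : HasDerivAt g g' t) (hfg : Set.EqOn f g s) : f' = g' :=
  hs.eq_deriv s (hf.hasDerivWithinAt.congr_of_mem (fun _ hx => (hfg hx).symm) ht)
    hg.hasDerivWithinAt

theorem HasDerivAt.inner_const {V : Type*} [NormedAddCommGroup V] [InnerProductSpace ℝ V]
    {f : ℝ → V} {f' : V} {t : ℝ} (hf : HasDerivAt f f' t) (v : V) :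
    HasDerivAt (fun s => ⟪f s, v⟫) ⟪f', v⟫ t := by
  simpa using hf.inner ℝ (hasDerivAt_const t v)

theorem norm_sqrt_smul_add_inv_sqrt_smul_sq {V : Type*} [NormedAddCommGroup V]
    [InnerProductSpace ℝ V] {τ : ℝ} (hτ : 0 < τ) (a b : V) :
    ‖Real.sqrt τ • a + (Real.sqrt τ)⁻¹ • b‖ ^ 2 = τ * ‖a‖ ^ 2 + 2 * ⟪a, b⟫ + τ⁻¹ * ‖b‖ ^ 2 := by
  have hsqrt : Real.sqrt τ ≠ 0 := (Real.sqrt_pos.mpr hτ).ne'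
  rw [norm_add_sq_real, norm_smul, norm_smul, real_inner_smul_left, real_inner_smul_right,
    norm_inv, Real.norm_of_nonneg (Real.sqrt_nonneg τ), mul_pow, mul_pow, inv_pow,
    Real.sq_sqrt hτ.le]
  field_simp

section GrapheneSystem

variable {X Y Z : Type*}
    [NormedAddCommGroup X] [InnerProductSpace ℝ X]
    [NormedAddCommGroup Y] [InnerProductSpace ℝ Y]
    [NormedAddCommGroup Z] [InnerProductSpace ℝ Z]
    (B : X →L[ℝ] Y) (T : X →L[ℝ] Z) (ε₀ μ₀ τ₀ σ₀ : ℝ)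

theorem hasDerivAt_graphene_energy {E : ℝ → X} {H : ℝ → Y} {t : ℝ} (hτ₀ : 0 < τ₀)
    (hE : HasDerivAt E (deriv E t) t) (hE' : HasDerivAt (deriv E) (deriv (deriv E) t) t)
    (hH : HasDerivAt H (deriv H t) t) (hH' : HasDerivAt (deriv H) (deriv (deriv H) t) t) :
    HasDerivAt (fun s => τ₀ * ε₀ * ‖deriv E s‖ ^ 2 + σ₀ * ‖T (E s)‖ ^ 2
        + μ₀ * ‖Real.sqrt τ₀ • deriv H s + (Real.sqrt τ₀)⁻¹ • H s‖ ^ 2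
        - (μ₀ / τ₀) * ‖H s‖ ^ 2)
      (2 * (τ₀ * ε₀ * ⟪deriv (deriv E) t, deriv E t⟫ + σ₀ * ⟪T (E t), T (deriv E t)⟫
        + μ₀ * τ₀ * ⟪deriv (deriv H) t, deriv H t⟫ + μ₀ * ‖deriv H t‖ ^ 2
        + μ₀ * ⟪deriv (deriv H) t, H t⟫)) t := by
  have hexpand : (fun s => τ₀ * ε₀ * ‖deriv E s‖ ^ 2 + σ₀ * ‖T (E s)‖ ^ 2
        + μ₀ * ‖Real.sqrt τ₀ • deriv H s + (Real.sqrt τ₀)⁻¹ • H s‖ ^ 2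
        - (μ₀ / τ₀) * ‖H s‖ ^ 2) = fun s => τ₀ * ε₀ * ‖deriv E s‖ ^ 2 + σ₀ * ‖T (E s)‖ ^ 2
        + μ₀ * τ₀ * ‖deriv H s‖ ^ 2 + 2 * μ₀ * ⟪deriv H s, H s⟫ := by
    funext s
    rw [norm_sqrt_smul_add_inv_sqrt_smul_sq hτ₀]
    ring
  have hTE : HasDerivAt (fun s => T (E s)) (T (deriv E t)) t :=
    T.hasFDerivAt.comp_hasDerivAt t hE
  rw [hexpand]
  refine ((((hE'.norm_sq.const_mul (τ₀ * ε₀)).add (hTE.norm_sq.const_mul σ₀)).add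
    (hH'.norm_sq.const_mul (μ₀ * τ₀))).add ((hH'.inner ℝ hH).const_mul (2 * μ₀))).congr_deriv ?_
  rw [← real_inner_self_eq_norm_sq, real_inner_comm (deriv (deriv E) t),
    real_inner_comm (deriv (deriv H) t)]
  ring

theorem graphene_energy_balance {e e' e'' : X} {h h' h'' k' : Y} {j j' : Z}
    (h1 : ε₀ * ⟪e', e'⟫ = ⟪h, B e'⟫ - ⟪j, T e'⟫)
    (h1' : ε₀ * ⟪e'', e'⟫ = ⟪h', B e'⟫ - ⟪j', T e'⟫)
    (h2' : μ₀ • h'' = -(B e') - k')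
    (h3 : τ₀ • j' + j = σ₀ • T e) :
    τ₀ * ε₀ * ⟪e'', e'⟫ + σ₀ * ⟪T e, T e'⟫ + μ₀ * τ₀ * ⟪h'', h'⟫ + μ₀ * ‖h'‖ ^ 2
        + μ₀ * ⟪h'', h⟫ + ε₀ * ⟪e', e'⟫
      = μ₀ * ‖h'‖ ^ 2 - ⟪h, k'⟫ - τ₀ * ⟪h', k'⟫ := by
  have h2h : μ₀ * ⟪h'', h⟫ = -⟪h, B e'⟫ - ⟪h, k'⟫ := by
    rw [← real_inner_smul_left, h2', inner_sub_left, inner_neg_left, real_inner_comm h,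
      real_inner_comm h]
  have h2h' : μ₀ * ⟪h'', h'⟫ = -⟪h', B e'⟫ - ⟪h', k'⟫ := by
    rw [← real_inner_smul_left, h2', inner_sub_left, inner_neg_left, real_inner_comm h',
      real_inner_comm h']
  have h3e : τ₀ * ⟪j', T e'⟫ + ⟪j, T e'⟫ = σ₀ * ⟪T e, T e'⟫ := by
    rw [← real_inner_smul_left, ← inner_add_left, h3, real_inner_smul_left]
  linear_combination h1 + τ₀ * h1' + h2h + τ₀ * h2h' - h3e

end GrapheneSystem

theorem graphene_identity_p13_general
    {X Y Z : Type*}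
    [NormedAddCommGroup X] [InnerProductSpace ℝ X]
    [NormedAddCommGroup Y] [InnerProductSpace ℝ Y]
    [NormedAddCommGroup Z] [InnerProductSpace ℝ Z]
    (B : X →L[ℝ] Y) (T : X →L[ℝ] Z)
    (ε₀ μ₀ τ₀ σ₀ Tfin : ℝ)
    (hτ₀ : 0 < τ₀) (hTfin : 0 < Tfin)
    (E : ℝ → X) (H : ℝ → Y) (J : ℝ → Z) (K : ℝ → Y)
    (hE : ContDiff ℝ 2 E) (hH : ContDiff ℝ 2 H) (hJ : ContDiff ℝ 2 J)
    (hK : ContDiff ℝ 1 K)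
    (heq1 : ∀ t ∈ Set.Icc (0:ℝ) Tfin, ∀ φ : X,
      ε₀ * ⟪deriv E t, φ⟫ = ⟪H t, B φ⟫ - ⟪J t, T φ⟫)
    (heq2 : ∀ t ∈ Set.Icc (0:ℝ) Tfin, μ₀ • deriv H t = -(B (E t)) - K t)
    (heq3 : ∀ t ∈ Set.Icc (0:ℝ) Tfin, τ₀ • deriv J t + J t = σ₀ • T (E t)) :
    ∀ t ∈ Set.Icc (0:ℝ) Tfin,
      (1/2) * deriv (fun s => τ₀ * ε₀ * ‖deriv E s‖^2 + σ₀ * ‖T (E s)‖^2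
          + μ₀ * ‖Real.sqrt τ₀ • deriv H s + (Real.sqrt τ₀)⁻¹ • H s‖^2
          - (μ₀/τ₀) * ‖H s‖^2) t
        + ε₀ * ‖deriv E t‖^2
      = μ₀ * ‖deriv H t‖^2 - ⟪H t, deriv K t⟫ - τ₀ * ⟪deriv H t, deriv K t⟫ := by
  intro t ht
  have hU : UniqueDiffWithinAt ℝ (Set.Icc 0 Tfin) t := uniqueDiffOn_Icc hTfin t ht
  have dE : HasDerivAt E (deriv E t) t := (hE.differentiable two_ne_zero t).hasDerivAt
  have dH : HasDerivAt H (deriv H t) t := (hH.differentiable two_ne_zero t).hasDerivAt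
  have dJ : HasDerivAt J (deriv J t) t := (hJ.differentiable two_ne_zero t).hasDerivAt
  have dK : HasDerivAt K (deriv K t) t := (hK.differentiable one_ne_zero t).hasDerivAt
  have dE' : HasDerivAt (deriv E) (deriv (deriv E) t) t :=
    (hE.differentiable_deriv_two t).hasDerivAt
  have dH' : HasDerivAt (deriv H) (deriv (deriv H) t) t :=
    (hH.differentiable_deriv_two t).hasDerivAt
  have heq1' : ε₀ * ⟪deriv (deriv E) t, deriv E t⟫
      = ⟪deriv H t, B (deriv E t)⟫ - ⟪deriv J t, T (deriv E t)⟫ :=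
    HasDerivAt.eq_of_eqOn hU ht ((dE'.inner_const _).const_mul ε₀)
      ((dH.inner_const _).sub (dJ.inner_const _)) fun s hs => heq1 s hs (deriv E t)
  have heq2' : μ₀ • deriv (deriv H) t = -(B (deriv E t)) - deriv K t :=
    HasDerivAt.eq_of_eqOn hU ht (dH'.const_smul μ₀)
      ((B.hasFDerivAt.comp_hasDerivAt t dE).neg.sub dK) heq2
  rw [(hasDerivAt_graphene_energy T ε₀ μ₀ τ₀ σ₀ hτ₀ dE dE' dH dH').deriv,
    ← real_inner_self_eq_norm_sq (deriv E t)]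
  linear_combination graphene_energy_balance B T ε₀ μ₀ τ₀ σ₀ (heq1 t ht (deriv E t)) heq1' heq2'
    (heq3 t ht)

/-- The identity (2.21) of the stability proof. -/
theorem graphene_identity_p13
    {X Y Z : Type*}
    [NormedAddCommGroup X] [InnerProductSpace ℝ X]
    [NormedAddCommGroup Y] [InnerProductSpace ℝ Y]
    [NormedAddCommGroup Z] [InnerProductSpace ℝ Z]
    (B : X →L[ℝ] Y) (T : X →L[ℝ] Z)
    (ε₀ μ₀ τ₀ σ₀ Tfin : ℝ)
    (hε₀ : 0 < ε₀) (hμ₀ : 0 < μ₀) (hτ₀ : 0 < τ₀) (hσ₀ : 0 < σ₀) (hTfin : 0 < Tfin)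
    (E : ℝ → X) (H : ℝ → Y) (J : ℝ → Z) (K : ℝ → Y)
    (hE : ContDiff ℝ 2 E) (hH : ContDiff ℝ 2 H) (hJ : ContDiff ℝ 2 J)
    (hK : ContDiff ℝ 1 K)
    (heq1 : ∀ t ∈ Set.Icc (0:ℝ) Tfin, ∀ φ : X,
      ε₀ * ⟪deriv E t, φ⟫ = ⟪H t, B φ⟫ - ⟪J t, T φ⟫)
    (heq2 : ∀ t ∈ Set.Icc (0:ℝ) Tfin, μ₀ • deriv H t = -(B (E t)) - K t)
    (heq3 : ∀ t ∈ Set.Icc (0:ℝ) Tfin, τ₀ • deriv J t + J t = σ₀ • T (E t)) :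
    ∀ t ∈ Set.Icc (0:ℝ) Tfin,
      (1/2) * deriv (fun s => τ₀ * ε₀ * ‖deriv E s‖^2 + σ₀ * ‖T (E s)‖^2
          + μ₀ * ‖Real.sqrt τ₀ • deriv H s + (Real.sqrt τ₀)⁻¹ • H s‖^2
          - (μ₀/τ₀) * ‖H s‖^2) t
        + ε₀ * ‖deriv E t‖^2
      = μ₀ * ‖deriv H t‖^2 - ⟪H t, deriv K t⟫ - τ₀ * ⟪deriv H t, deriv K t⟫ :=
  graphene_identity_p13_general B T ε₀ μ₀ τ₀ σ₀ Tfin hτ₀ hTfin E H J K hE hH hJ hK heq1 heq2 heq3
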